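/- arXiv:1505.03988 — 5 statements merged into one kernel-verified Lean document; each statement's English description precedes it below -/
import Mathlib

section
/- Abstractly: suppose (μ_k)_{k≥0} is a family of functions ℝ_{>0} → ℝ_{≥0} with μ_0 ≡ 0, μ_1 = μ, and μ_{k+1}(R) ≤ c·2μ_k(R/2) + μ(R/2)(c^k + 2μ_k(R/2)) where c ∈ (0, 1/(2^{n+1}·5)) and μ(R) ≤ D/R^n for R ≥ 1 and μ(R) ≤ c for all R. Then for every N and all R > 2^N, the sum ν_N(R) := Σ_{k=0}^{N} μ_k(R) satisfies ν_N(R) ≤ (D + D/(1-c))·R^{-n}. -/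
/-!
By induction on `k`, `μs (k + 1) R ≤ 2⁻ᵏ · D / Rⁿ` for `R > 2ᵏ`: the recursion evaluates the
previous term at `R / 2`, which costs a factor `2ⁿ`, and the smallness `5 · 2ⁿ · c < 1 / 2`
absorbs that factor together with the halving. Summing the geometric series gives
`∑ μs k R ≤ 2 D / Rⁿ ≤ (D + D / (1 - c)) / Rⁿ`.
-/

open Finset

lemma two_pow_mul_le_of_lt_one_div {c : ℝ} {n : ℕ} (hc : c < 1 / (2 ^ (n + 1) * 5)) :
    2 ^ n * c ≤ 1 / 10 := by
  have h := (lt_div_iff₀ (by positivity : (0 : ℝ) < 2 ^ (n + 1) * 5)).mp hc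
  rw [pow_succ] at h
  linarith

lemma le_two_pow_mul {c : ℝ} (n : ℕ) (hc : 0 ≤ c) : c ≤ 2 ^ n * c :=
  le_mul_of_one_le_left hc (one_le_pow₀ one_le_two)

lemma div_half_pow (D R : ℝ) (n : ℕ) : D / (R / 2) ^ n = 2 ^ n * (D / R ^ n) := by
  rw [div_pow, div_div_eq_mul_div, mul_comm, mul_div_assoc]

/-- One step of the induction, with `E = D / Rⁿ`, `t = 2⁻ᵏ`, `m = μs (k + 1) (R / 2)` and
`u = μ (R / 2)`. -/
lemma recursion_step_le {c E t m u : ℝ} {n k : ℕ} (hc : 0 ≤ c) (hcn : 2 ^ n * c ≤ 1 / 10)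
    (hE : 0 ≤ E) (hct : c ^ k ≤ t) (hm₀ : 0 ≤ m) (hm : m ≤ t * (2 ^ n * E))
    (huc : u ≤ c) (huE : u ≤ 2 ^ n * E) :
    c * (2 * m) + u * (c ^ (k + 1) + 2 * m) ≤ t / 2 * E := by
  have hum : u * m ≤ c * m := mul_le_mul_of_nonneg_right huc hm₀
  have hcm : c * m ≤ t * (2 ^ n * c) * E := by
    calc c * m ≤ c * (t * (2 ^ n * E)) := mul_le_mul_of_nonneg_left hm hc
      _ = t * (2 ^ n * c) * E := by ring
  have huck : u * c ^ (k + 1) ≤ t * (2 ^ n * c) * E := by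
    calc u * c ^ (k + 1) ≤ 2 ^ n * E * c ^ (k + 1) := by gcongr
      _ = c ^ k * (2 ^ n * c) * E := by ring
      _ ≤ t * (2 ^ n * c) * E := by gcongr
  have ht : 0 ≤ t := (pow_nonneg hc k).trans hct
  have hsmall : t * (2 ^ n * c) * E ≤ t * (1 / 10) * E := by gcongr
  linarith

section

variable {μs : ℕ → ℝ → ℝ} {μ : ℝ → ℝ} {c D : ℝ} {n : ℕ}

lemma le_geometric_of_recursion (hD : 0 ≤ D) (hc : 0 ≤ c) (hcn : 2 ^ n * c ≤ 1 / 10)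
    (hnonneg : ∀ k R, 0 < R → 0 ≤ μs k R)
    (hone : ∀ R, 0 < R → μs 1 R = μ R)
    (hrec : ∀ k : ℕ, ∀ R : ℝ, 0 < R →
      μs (k + 1) R ≤ c * (2 * μs k (R / 2)) + μ (R / 2) * (c ^ k + 2 * μs k (R / 2)))
    (hμD : ∀ R : ℝ, 1 ≤ R → μ R ≤ D / R ^ n)
    (hμc : ∀ R : ℝ, 0 < R → μ R ≤ c) :
    ∀ k : ℕ, ∀ R : ℝ, 2 ^ k < R → μs (k + 1) R ≤ (1 / 2) ^ k * (D / R ^ n) := by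
  intro k
  induction k with
  | zero =>
    intro R hR
    rw [pow_zero] at hR
    rw [hone R (by linarith), pow_zero, one_mul]
    exact hμD R hR.le
  | succ k ih =>
    intro R hR
    have hhalf : 2 ^ k < R / 2 := by rw [pow_succ] at hR; linarith
    have hhalf_one : 1 ≤ R / 2 := (one_le_pow₀ one_le_two).trans hhalf.le
    have hR : 0 < R := by linarith
    have hm := ih (R / 2) hhalf
    rw [div_half_pow] at hm
    have huE := hμD (R / 2) hhalf_one
    rw [div_half_pow] at huE
    have hc_le : c ≤ 1 / 2 := by linarith [le_two_pow_mul n hc]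
    have hct : c ^ k ≤ (1 / 2) ^ k := pow_le_pow_left₀ hc hc_le k
    calc μs (k + 1 + 1) R
        ≤ c * (2 * μs (k + 1) (R / 2)) + μ (R / 2) * (c ^ (k + 1) + 2 * μs (k + 1) (R / 2)) :=
          hrec (k + 1) R hR
      _ ≤ (1 / 2) ^ k / 2 * (D / R ^ n) :=
          recursion_step_le hc hcn (by positivity) hct (hnonneg _ _ (by linarith)) hm
            (hμc _ (by linarith)) huE
      _ = (1 / 2) ^ (k + 1) * (D / R ^ n) := by ring

end

/-- the abstract Neumann-series estimate.  Suppose `(μs k)_{k ≥ 0}` is a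
family of functions `ℝ_{>0} → ℝ_{≥0}` with `μs 0 ≡ 0`, `μs 1 = μ`, and
`μs (k+1) R ≤ c·2·μs k (R/2) + μ (R/2)·(c^k + 2·μs k (R/2))`, where
`0 < c < 1/(2^(n+1)·5)`, `μ R ≤ D / R^n` for `R ≥ 1` and `μ R ≤ c` for all `R > 0`.
Then for every `N` and all `R > 2^N` the sum `ν_N(R) := ∑_{k=0}^{N} μs k R` satisfies
`ν_N(R) ≤ (D + D/(1-c)) / R^n`. -/
theorem neumann_partial_sum_dominating_estimate
    (μs : ℕ → ℝ → ℝ) (μ : ℝ → ℝ) (c D : ℝ) (n : ℕ)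
    (hD : 0 < D)
    (hc : 0 < c) (hc' : c < 1 / (2 ^ (n + 1) * 5))
    (hnonneg : ∀ k R, 0 < R → 0 ≤ μs k R)
    (hzero : ∀ R, 0 < R → μs 0 R = 0)
    (hone : ∀ R, 0 < R → μs 1 R = μ R)
    (hrec : ∀ k : ℕ, ∀ R : ℝ, 0 < R →
      μs (k + 1) R ≤ c * (2 * μs k (R / 2)) + μ (R / 2) * (c ^ k + 2 * μs k (R / 2)))
    (hμD : ∀ R : ℝ, 1 ≤ R → μ R ≤ D / R ^ n)
    (hμc : ∀ R : ℝ, 0 < R → μ R ≤ c) :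
    ∀ N : ℕ, ∀ R : ℝ, (2 : ℝ) ^ N < R →
      ∑ k ∈ Finset.range (N + 1), μs k R ≤ (D + D / (1 - c)) / R ^ n := by
  intro N R hR
  have hR₀ : 0 < R := (pow_pos two_pos N).trans hR
  have hcn := two_pow_mul_le_of_lt_one_div hc'
  have hc_lt_one : c < 1 := by linarith [le_two_pow_mul n hc.le]
  have hgeom := le_geometric_of_recursion hD.le hc.le hcn hnonneg hone hrec hμD hμc
  calc ∑ k ∈ range (N + 1), μs k R
      = ∑ k ∈ range N, μs (k + 1) R := by
        rw [sum_range_succ', hzero R hR₀, add_zero]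
    _ ≤ ∑ k ∈ range N, (1 / 2) ^ k * (D / R ^ n) := sum_le_sum fun k hk =>
        hgeom k R ((pow_lt_pow_right₀ one_lt_two (mem_range.mp hk)).trans hR)
    _ = (∑ k ∈ range N, (1 / 2 : ℝ) ^ k) * (D / R ^ n) := (sum_mul ..).symm
    _ ≤ 2 * (D / R ^ n) := by
        gcongr
        exact sum_geometric_two_le N
    _ ≤ (D + D / (1 - c)) / R ^ n := by
        rw [two_mul, add_div]
        gcongr
        exact le_div_self hD.le (by linarith) (by linarith)
end

section
/- Let A be a normed algebra (possibly non-unital) with the property that for every a ∈ A and every power series f around 0 ∈ ℂ with radius of convergence strictly greater than ‖a‖ (and f(0) = 0 if A is non-unital), the element f(a) belongs to A. Then A is closed under holomorphic functional calculus in its C*-completion. -/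
/-!
Shrink the contour to a circle `C(c, ρ)` that still encloses the spectrum and on which the Taylor
series `f z = ∑ pₙ (z - c)ⁿ` converges uniformly. Integrating termwise, with
`(2πi)⁻¹ ∮ (z - c)ⁿ (z - a)⁻¹ dz = (a - c)ⁿ` (enlarge the circle beyond `‖a - c‖` and expand the
resolvent in its Neumann series), gives `f(a) = ∑ pₙ bⁿ` with `b = a - c ∈ A` and
`∑ |pₙ| tⁿ < ∞` for some `t` above the spectral radius of `b`. By Gelfand's formula `‖bᵏ‖ < tᵏ`
for some `k ≥ 1`, and splitting the series by residues mod `k` writes it as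
`∑_{j<k} bʲ gⱼ(bᵏ)`, where each power series `gⱼ` converges beyond `‖bᵏ‖`, so the hypothesis on
`A` applies to it.
-/

open Complex Filter Metric Set
open scoped Real ENNReal

section

variable {B : Type*} [NormedRing B] [NormedAlgebra ℂ B]

theorem hasSum_resolvent_of_norm_lt [CompleteSpace B] {b : B} {w : ℂ} (h : ‖b‖ < ‖w‖) :
    HasSum (fun m : ℕ => w⁻¹ ^ (m + 1) • b ^ m) (resolvent b w) := by
  have hw : w ≠ 0 := norm_pos_iff.1 ((norm_nonneg b).trans_lt h)
  have hsmall : ‖w⁻¹ • b‖ < 1 := by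
    rwa [norm_smul, norm_inv, inv_mul_lt_iff₀ ((norm_nonneg b).trans_lt h), mul_one]
  have hgeom : HasSum (fun m : ℕ => (w⁻¹ • b) ^ m) (resolvent (w⁻¹ • b) (1 : ℂ)) := by
    rw [resolvent, map_one, NormedRing.inverse_one_sub _ hsmall]
    exact (summable_geometric_of_norm_lt_one hsmall).hasSum
  have hscale : resolvent b w = w⁻¹ • resolvent (w⁻¹ • b) (1 : ℂ) := by
    have := spectrum.units_smul_resolvent_self (r := Units.mk0 w hw) (a := b)
    rw [Units.smul_def, Units.smul_def, Units.val_inv_eq_inv_val, Units.val_mk0] at this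
    rw [eq_inv_smul_iff₀ hw, this]
  rw [hscale]
  convert hgeom.const_smul w⁻¹ using 2 with m
  rw [smul_pow, smul_smul, pow_succ']

theorem circleIntegral.hasSum_integral_of_dominated_convergence {E : Type*}
    [NormedAddCommGroup E] [NormedSpace ℂ E] [CompleteSpace E] {F : ℕ → ℂ → E} {f : ℂ → E}
    {c : ℂ} {R : ℝ} {bound : ℕ → ℝ} (hR : 0 ≤ R)
    (hF : ∀ n, ContinuousOn (F n) (sphere c R))
    (hbound : ∀ n, ∀ z ∈ sphere c R, ‖F n z‖ ≤ bound n) (hsum : Summable bound)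
    (hf : ∀ z ∈ sphere c R, HasSum (fun n => F n z) (f z)) :
    HasSum (fun n => ∮ z in C(c, R), F n z) (∮ z in C(c, R), f z) := by
  refine intervalIntegral.hasSum_integral_of_dominated_convergence (fun n _ => R * bound n)
    (fun n => ?_) (fun n => ?_) ?_ intervalIntegrable_const ?_
  · simp only [deriv_circleMap]
    exact ((continuous_circleMap 0 R).mul continuous_const).aestronglyMeasurable.smul
      ((hF n).circleIntegrable hR).def'.1
  · filter_upwards with θ _
    rw [norm_smul, deriv_circleMap, norm_mul, norm_circleMap_zero, norm_I, mul_one,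
      abs_of_nonneg hR]
    exact mul_le_mul_of_nonneg_left (hbound n _ (circleMap_mem_sphere c hR θ)) hR
  · exact Eventually.of_forall fun θ _ => hsum.mul_left R
  · exact Eventually.of_forall fun θ _ => (hf _ (circleMap_mem_sphere c hR θ)).const_smul _

theorem circleIntegral_sub_pow_mul_inv_pow (c : ℂ) {R : ℝ} (hR : 0 < R) (n m : ℕ) :
    ∮ z in C(c, R), (z - c) ^ n * (z - c)⁻¹ ^ (m + 1) = if m = n then 2 * π * I else 0 := by
  have hzpow : ∮ z in C(c, R), (z - c) ^ n * (z - c)⁻¹ ^ (m + 1)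
      = ∮ z in C(c, R), (z - c) ^ ((n : ℤ) - (m + 1)) := by
    refine circleIntegral.integral_congr hR.le fun z hz => ?_
    have hz0 : z - c ≠ 0 := sub_ne_zero.2 (ne_of_mem_sphere hz hR.ne')
    simp only [zpow_sub₀ hz0, zpow_natCast, inv_pow, div_eq_mul_inv]
    norm_cast
  rw [hzpow]
  split_ifs with hmn
  · subst hmn
    simp [circleIntegral.integral_sub_inv_of_mem_ball (mem_ball_self hR)]
  · exact circleIntegral.integral_sub_zpow_of_ne (by omega) c c R

theorem circleIntegral_sub_pow_smul_resolvent_of_norm_lt [CompleteSpace B] (b : B) (c : ℂ)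
    {R : ℝ} (hR : ‖b‖ < R) (n : ℕ) :
    ∮ z in C(c, R), (z - c) ^ n • resolvent b (z - c) = (2 * π * I) • b ^ n := by
  have hR0 : 0 < R := (norm_nonneg b).trans_lt hR
  have hzc : ∀ z ∈ sphere c R, ‖z - c‖ = R := fun z hz => mem_sphere_iff_norm.1 hz
  have hsum := circleIntegral.hasSum_integral_of_dominated_convergence (c := c) hR0.le
    (F := fun m z => ((z - c) ^ n * (z - c)⁻¹ ^ (m + 1)) • b ^ m)
    (f := fun z => (z - c) ^ n • resolvent b (z - c))
    (bound := fun m => R ^ n * R⁻¹ * ‖((R : ℂ)⁻¹ • b) ^ m‖) ?_ ?_ ?_ ?_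
  · simp_rw [circleIntegral.integral_smul_const, circleIntegral_sub_pow_mul_inv_pow c hR0,
      ite_smul, zero_smul] at hsum
    simpa using hsum.unique (hasSum_single n fun m hm => if_neg hm)
  · intro m
    have hne : ∀ z ∈ sphere c R, z - c ≠ 0 := fun z hz =>
      sub_ne_zero.2 (ne_of_mem_sphere hz hR0.ne')
    fun_prop (disch := exact hne)
  · intro m z hz
    simp only [smul_pow, norm_smul, norm_mul, norm_pow, norm_inv, hzc z hz, Complex.norm_real,
      Real.norm_of_nonneg hR0.le]
    exact le_of_eq (by ring)
  · exact (summable_norm_geometric_of_norm_lt_one (by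
      rwa [norm_smul, norm_inv, Complex.norm_real, Real.norm_of_nonneg hR0.le,
        inv_mul_lt_iff₀ hR0, mul_one])).mul_left _
  · intro z hz
    have := (hasSum_resolvent_of_norm_lt (hR.trans_eq (hzc z hz).symm)).const_smul ((z - c) ^ n)
    simpa only [smul_smul] using this

theorem differentiableAt_resolvent [CompleteSpace B] {a : B} {z : ℂ} (hz : z ∉ spectrum ℂ a) :
    DifferentiableAt ℂ (resolvent a) z :=
  (spectrum.hasDerivAt_resolvent_const_left (spectrum.notMem_iff.mp hz)).differentiableAt

theorem inverse_smul_one_sub_eq_resolvent (a : B) (z : ℂ) :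
    Ring.inverse (z • (1 : B) - a) = resolvent a z := by
  rw [resolvent, Algebra.algebraMap_eq_smul_one]

theorem resolvent_eq_resolvent_sub_algebraMap (a : B) (z c : ℂ) :
    resolvent a z = resolvent (a - algebraMap ℂ B c) (z - c) := by
  rw [resolvent, resolvent, map_sub, sub_sub_sub_cancel_right]

theorem circleIntegral_smul_resolvent_eq_of_spectrum_subset [CompleteSpace B] {a : B}
    {g : ℂ → ℂ} {c : ℂ} {ρ R : ℝ} (hρ : 0 < ρ) (hρR : ρ ≤ R) (hσ : spectrum ℂ a ⊆ ball c ρ)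
    (hg : DifferentiableOn ℂ g (closedBall c R)) :
    ∮ z in C(c, R), g z • resolvent a z = ∮ z in C(c, ρ), g z • resolvent a z := by
  refine circleIntegral_eq_of_differentiable_on_annulus_off_countable hρ hρR countable_empty
    ((hg.continuousOn.mono sdiff_subset).smul fun z hz => ?_) fun z hz => ?_
  · exact (differentiableAt_resolvent fun h => hz.2 (hσ h)).continuousAt.continuousWithinAt
  · obtain ⟨⟨hzR, hzρ⟩, -⟩ := hz
    exact (hg.differentiableAt (closedBall_mem_nhds_of_mem hzR)).smul
      (differentiableAt_resolvent fun h => hzρ (ball_subset_closedBall (hσ h)))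

theorem circleIntegral_sub_pow_smul_resolvent [CompleteSpace B] {a : B} {c : ℂ} {ρ : ℝ}
    (hρ : 0 < ρ) (hσ : spectrum ℂ a ⊆ ball c ρ) (n : ℕ) :
    ∮ z in C(c, ρ), (z - c) ^ n • resolvent a z = (2 * π * I) • (a - algebraMap ℂ B c) ^ n := by
  set b := a - algebraMap ℂ B c
  rw [← circleIntegral_smul_resolvent_eq_of_spectrum_subset hρ (le_max_left ρ (‖b‖ + 1)) hσ
    (by fun_prop)]
  simp_rw [resolvent_eq_resolvent_sub_algebraMap a _ c]
  exact circleIntegral_sub_pow_smul_resolvent_of_norm_lt b c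
    ((lt_add_one _).trans_le (le_max_right _ _)) n

theorem FormalMultilinearSeries.summable_norm_coeff_mul_pow {𝕜 E : Type*}
    [NontriviallyNormedField 𝕜] [NormedAddCommGroup E] [NormedSpace 𝕜 E]
    (p : FormalMultilinearSeries 𝕜 𝕜 E) {s : ℝ} (hs : 0 ≤ s) (h : ENNReal.ofReal s < p.radius) :
    Summable fun n => ‖p.coeff n‖ * s ^ n := by
  simpa [norm_apply_eq_norm_coef, Real.coe_toNNReal _ hs] using p.summable_norm_mul_pow h

theorem HasFPowerSeriesOnBall.hasSum_coeff_smul_pow_circleIntegral [CompleteSpace B] {a : B}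
    {f : ℂ → ℂ} {p : FormalMultilinearSeries ℂ ℂ ℂ} {c : ℂ} {R : ℝ≥0∞} {ρ : ℝ}
    (hf : HasFPowerSeriesOnBall f p c R) (hρ : 0 < ρ) (hρR : ENNReal.ofReal ρ < R)
    (hσ : spectrum ℂ a ⊆ ball c ρ) :
    HasSum (fun n => p.coeff n • (a - algebraMap ℂ B c) ^ n)
      ((2 * π * I)⁻¹ • ∮ z in C(c, ρ), f z • resolvent a z) := by
  have hres : ContinuousOn (resolvent a) (sphere c ρ) := fun z hz =>
    (differentiableAt_resolvent fun h => (mem_ball.1 (hσ h)).ne (mem_sphere.1 hz)).continuousAt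
      |>.continuousWithinAt
  obtain ⟨M, hM⟩ := (isCompact_sphere c ρ).exists_bound_of_continuousOn hres
  have hsum := circleIntegral.hasSum_integral_of_dominated_convergence (c := c) hρ.le
    (F := fun n z => ((z - c) ^ n * p.coeff n) • resolvent a z)
    (f := fun z => f z • resolvent a z) (bound := fun n => ‖p.coeff n‖ * ρ ^ n * M)
    (fun n => by fun_prop) ?_ ?_ ?_
  · have hterm : ∀ n, ∮ z in C(c, ρ), ((z - c) ^ n * p.coeff n) • resolvent a z
        = (2 * π * I) • p.coeff n • (a - algebraMap ℂ B c) ^ n := fun n => by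
      conv_lhs => simp only [mul_comm _ (p.coeff n), mul_smul]
      rw [circleIntegral.integral_smul, circleIntegral_sub_pow_smul_resolvent hρ hσ, smul_comm]
    simp_rw [hterm] at hsum
    simpa only [inv_smul_smul₀ two_pi_I_ne_zero] using hsum.const_smul (2 * π * I)⁻¹
  · intro n z hz
    rw [norm_smul, norm_mul, norm_pow, mem_sphere_iff_norm.1 hz, mul_comm (ρ ^ n)]
    exact mul_le_mul_of_nonneg_left (hM z hz) (by positivity)
  · exact (p.summable_norm_coeff_mul_pow hρ.le (hρR.trans_le hf.r_le)).mul_right M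
  · intro z hz
    have hz' : z - c ∈ eball (0 : ℂ) R := by
      rwa [mem_eball, edist_zero_right, ← ofReal_norm, mem_sphere_iff_norm.1 hz]
    simpa [FormalMultilinearSeries.apply_eq_pow_smul_coeff] using (hf.hasSum hz').smul_const
      (resolvent a z)

theorem spectralRadius_sub_algebraMap_le {a : B} {c : ℂ} {ρ : ℝ}
    (hσ : spectrum ℂ a ⊆ closedBall c ρ) :
    spectralRadius ℂ (a - algebraMap ℂ B c) ≤ ENNReal.ofReal ρ := by
  refine iSup₂_le fun k hk => ?_
  rw [← spectrum.sub_singleton_eq, sub_singleton] at hk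
  obtain ⟨k, hk, rfl⟩ := hk
  rw [← ENNReal.ofReal_coe_nnreal, coe_nnnorm, ← dist_eq_norm]
  exact ENNReal.ofReal_le_ofReal (hσ hk)

theorem eventually_norm_pow_lt_pow_of_spectralRadius_lt [CompleteSpace B] {b : B} {t : ℝ}
    (h : spectralRadius ℂ b < ENNReal.ofReal t) : ∀ᶠ n : ℕ in atTop, ‖b ^ n‖ < t ^ n := by
  have ht : 0 < t := ENNReal.ofReal_pos.1 (pos_of_gt h)
  have hroot := spectrum.pow_nnnorm_pow_one_div_tendsto_nhds_spectralRadius b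
  filter_upwards [hroot.eventually_lt_const h, eventually_gt_atTop 0] with n hn hn0
  rw [one_div, ENNReal.rpow_inv_lt_iff (by positivity), ENNReal.rpow_natCast,
    ← ENNReal.ofReal_pow ht.le, ← ENNReal.ofReal_coe_nnreal, coe_nnnorm] at hn
  exact (ENNReal.ofReal_lt_ofReal_iff_of_nonneg (norm_nonneg _)).1 hn

theorem summable_smul_pow_of_norm_le [CompleteSpace B] {b : B} {g : ℕ → ℂ} {x : ℝ}
    (hbx : ‖b‖ ≤ x) (hg : Summable fun m => ‖g m‖ * x ^ m) : Summable fun m => g m • b ^ m := by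
  refine hg.of_norm_bounded_eventually ?_
  rw [Nat.cofinite_eq_atTop]
  filter_upwards [eventually_gt_atTop 0] with m hm
  rw [norm_smul]
  gcongr
  exact (norm_pow_le' b hm).trans (pow_le_pow_left₀ (norm_nonneg b) hbx m)

def IsClosedUnderPowerSeries (A : Subalgebra ℂ B) : Prop :=
  ∀ a ∈ A, ∀ (f : ℕ → ℂ) (x : ℝ), ‖a‖ < x → f 0 = 0 →
    Summable (fun i : ℕ => ‖f i‖ * x ^ i) → (∑' i : ℕ, f i • a ^ i) ∈ A

namespace IsClosedUnderPowerSeries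

variable [CompleteSpace B] {A : Subalgebra ℂ B} {b : B}

theorem tsum_smul_pow_mem_of_norm_lt (hA : IsClosedUnderPowerSeries A) (hb : b ∈ A)
    {g : ℕ → ℂ} {x : ℝ} (hbx : ‖b‖ < x) (hg : Summable fun m => ‖g m‖ * x ^ m) :
    ∑' m, g m • b ^ m ∈ A := by
  set g₀ := Function.update g 0 0
  have hg₀ : Summable fun m => ‖g₀ m‖ * x ^ m := by
    refine (summable_nat_add_iff 1).1 ?_
    simpa [g₀] using (summable_nat_add_iff 1).2 hg
  have hmem := hA b hb g₀ x hbx (by simp [g₀]) hg₀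
  rw [(summable_smul_pow_of_norm_le hbx.le hg₀).tsum_eq_zero_add] at hmem
  rw [(summable_smul_pow_of_norm_le hbx.le hg).tsum_eq_zero_add]
  simpa [g₀] using A.add_mem (A.smul_mem A.one_mem (g 0)) hmem

theorem tsum_smul_pow_mem (hA : IsClosedUnderPowerSeries A) (hb : b ∈ A) {g : ℕ → ℂ} {t : ℝ}
    (ht : 0 < t) (hbt : ∀ᶠ n : ℕ in atTop, ‖b ^ n‖ < t ^ n)
    (hg : Summable fun n => ‖g n‖ * t ^ n) : ∑' n, g n • b ^ n ∈ A := by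
  obtain ⟨k, hbk, hk⟩ := (hbt.and (eventually_gt_atTop 0)).exists
  have : NeZero k := ⟨hk.ne'⟩
  have hsum : Summable fun n => g n • b ^ n := by
    refine hg.of_norm_bounded_eventually ?_
    rw [Nat.cofinite_eq_atTop]
    filter_upwards [hbt] with n hn
    rw [norm_smul]
    gcongr
  rw [Nat.sumByResidueClasses hsum k]
  refine A.sum_mem fun j _ => ?_
  have hgj : Summable fun m => ‖g (j.val + k * m)‖ * (t ^ k) ^ m := by
    have hinj : Function.Injective fun m => j.val + k * m := fun m₁ m₂ h =>
      Nat.eq_of_mul_eq_mul_left hk (Nat.add_left_cancel h)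
    rw [← summable_mul_left_iff (pow_ne_zero j.val ht.ne')]
    refine (hg.comp_injective hinj).congr fun m => ?_
    simp only [Function.comp_apply, pow_add, pow_mul]
    ring
  have hsplit : ∀ m, g (j.val + k * m) • b ^ (j.val + k * m)
      = b ^ j.val * (g (j.val + k * m) • (b ^ k) ^ m) := fun m => by
    rw [pow_add, pow_mul, mul_smul_comm]
  simp_rw [hsplit]
  rw [(summable_smul_pow_of_norm_le hbk.le hgj).tsum_mul_left]
  exact A.mul_mem (pow_mem hb _) (hA.tsum_smul_pow_mem_of_norm_lt (pow_mem hb k) hbk hgj)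

end IsClosedUnderPowerSeries

end

theorem schmitt_criterion_holomorphic_functional_calculus_general
    {B : Type*} [NormedRing B] [NormedAlgebra ℂ B] [CompleteSpace B]
    (A : Subalgebra ℂ B)
    (hA : ∀ a ∈ A, ∀ (f : ℕ → ℂ) (x : ℝ), ‖a‖ < x → f 0 = 0 →
      Summable (fun i : ℕ => ‖f i‖ * x ^ i) → (∑' i : ℕ, f i • a ^ i) ∈ A) :
    ∀ a ∈ A, ∀ (c : ℂ) (r : ℝ) (f : ℂ → ℂ), 0 < r →
      spectrum ℂ a ⊆ Metric.ball c r →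
      DifferentiableOn ℂ f (Metric.closedBall c r) →
      f 0 = 0 →
      (((2 * Real.pi * Complex.I)⁻¹ : ℂ) •
          ∮ z in C(c, r), f z • Ring.inverse (z • (1 : B) - a)) ∈ A := by
  intro a ha c r f hr hσ hf _
  obtain ⟨ρ₀, hρ₀r, hσρ₀⟩ := exists_lt_subset_ball (spectrum.isClosed a) hσ
  set ρ := max ρ₀ (r / 2)
  have hρ : 0 < ρ := lt_max_of_lt_right (half_pos hr)
  have hρr : ρ < r := max_lt hρ₀r (half_lt_self hr)
  have hσρ : spectrum ℂ a ⊆ ball c ρ := hσρ₀.trans (ball_subset_ball (le_max_left _ _))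
  obtain ⟨t, hρt, htr⟩ := exists_between hρr
  have hp := (show DifferentiableOn ℂ f (closedBall c r.toNNReal) by
    rwa [Real.coe_toNNReal r hr.le]).hasFPowerSeriesOnBall (Real.toNNReal_pos.2 hr)
  have hpt : ENNReal.ofReal t < (cauchyPowerSeries f c r.toNNReal).radius :=
    ((ENNReal.ofReal_lt_ofReal_iff hr).2 htr).trans_le hp.r_le
  have hbt : spectralRadius ℂ (a - algebraMap ℂ B c) < ENNReal.ofReal t :=
    (spectralRadius_sub_algebraMap_le (hσρ.trans ball_subset_closedBall)).trans_lt
      ((ENNReal.ofReal_lt_ofReal_iff (hρ.trans hρt)).2 hρt)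
  simp_rw [inverse_smul_one_sub_eq_resolvent]
  rw [circleIntegral_smul_resolvent_eq_of_spectrum_subset hρ hρr.le hσρ hf,
    ← (hp.hasSum_coeff_smul_pow_circleIntegral hρ ((ENNReal.ofReal_lt_ofReal_iff hr).2 hρr)
      hσρ).tsum_eq]
  exact IsClosedUnderPowerSeries.tsum_smul_pow_mem hA (A.sub_mem ha (A.algebraMap_mem c))
    (hρ.trans hρt) (eventually_norm_pow_lt_pow_of_spectralRadius_lt hbt)
    ((cauchyPowerSeries f c _).summable_norm_coeff_mul_pow (hρ.trans hρt).le hpt)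

/-- Schmitt's criterion: let `A` be a (dense) subalgebra of a C*-algebra
`B` with the property that for every `a ∈ A` and every power series `f = ∑_{i≥1} fᵢ xⁱ`
around `0` with vanishing constant term and radius of convergence strictly greater than
`‖a‖`, the element `f(a) = ∑_{i} fᵢ aⁱ` belongs to `A`.  Then `A` is closed under
holomorphic functional calculus: for `a ∈ A` and `f` holomorphic on a closed disc whose
interior contains the spectrum of `a` (with `f 0 = 0`), the element `f(a)` defined by
the Cauchy integral `(2πi)⁻¹ ∮ f(z)(z·1 - a)⁻¹ dz` lies in `A`. -/
theorem schmitt_criterion_holomorphic_functional_calculus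
    {B : Type*} [NormedRing B] [NormedAlgebra ℂ B] [CompleteSpace B]
    [StarRing B] [CStarRing B]
    (A : Subalgebra ℂ B) (hdense : Dense (A : Set B))
    (hA : ∀ a ∈ A, ∀ (f : ℕ → ℂ) (x : ℝ), ‖a‖ < x → f 0 = 0 →
      Summable (fun i : ℕ => ‖f i‖ * x ^ i) → (∑' i : ℕ, f i • a ^ i) ∈ A) :
    ∀ a ∈ A, ∀ (c : ℂ) (r : ℝ) (f : ℂ → ℂ), 0 < r →
      spectrum ℂ a ⊆ Metric.ball c r →
      DifferentiableOn ℂ f (Metric.closedBall c r) →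
      f 0 = 0 →
      (((2 * Real.pi * Complex.I)⁻¹ : ℂ) •
          ∮ z in C(c, r), f z • Ring.inverse (z • (1 : B) - a)) ∈ A :=
  schmitt_criterion_holomorphic_functional_calculus_general A hA
end

section
/- Let A be an operator with bounded norms ‖A‖_{-k,l} (operator norms H^{-k} → H^l) for all k, l ∈ ℕ₀, where H^s denotes a scale of Hilbert spaces with continuous inclusions H^s ⊂ H^t for s ≥ t. If f(x) = Σ_{i≥1} a_i x^i is a power series with radius of convergence strictly greater than ‖A‖_{0,0}, then for all k, l ∈ ℕ₀ the series Σ_{i≥1} a_i A^i converges absolutely in the norm ‖·‖_{-k,l}, with bound ‖f(A)‖_{-k,l} ≤ |a₁|‖A‖_{-k,l} + Σ_{i≥2} |a_i| ‖A‖_{0,l} ‖A‖_{0,0}^{i-2} ‖A‖_{-k,0}. -/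
/-- The power `A^(i+1)` regarded as an operator `H^{-k} → H^l`, factored through `H^0`:
`powKL A k l 0 = A : H^{-k} → H^l` and for `i ≥ 1`,
`powKL A k l i = A ∘ A^{i-1} ∘ A : H^{-k} → H⁰ → H⁰ → H^l`. -/
noncomputable def powKL {H : ℤ → Type*} [∀ s, NormedAddCommGroup (H s)]
    [∀ s, NormedSpace ℂ (H s)]
    (A : ∀ s t : ℤ, H s →L[ℂ] H t) (k l : ℕ) : ℕ → (H (-(k : ℤ)) →L[ℂ] H (l : ℤ))
  | 0 => A (-(k : ℤ)) (l : ℤ)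
  | (i + 1) => (A 0 (l : ℤ)).comp (((A 0 0) ^ i).comp (A (-(k : ℤ)) 0))

/-!
Every power `A^{i+2}` factors as `H^{-k} → H⁰ → H⁰ → H^l`, with the middle factor `A^i` acting
on `H⁰`, so `‖A^{i+2}‖_{-k,l} ≤ ‖A‖_{0,l} ‖A‖_{0,0}^i ‖A‖_{-k,0}`. Since `‖A‖_{0,0}` lies inside
the disc of convergence of `∑ |aᵢ| xⁱ`, these bounds are summable against `|a_{i+2}|`, and the
series `∑ aᵢ Aⁱ` converges absolutely in every `‖·‖_{-k,l}` by comparison.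
-/

theorem ContinuousLinearMap.norm_pow_le_pow_norm {𝕜 E : Type*} [NontriviallyNormedField 𝕜]
    [SeminormedAddCommGroup E] [NormedSpace 𝕜 E] (f : E →L[𝕜] E) :
    ∀ n : ℕ, ‖f ^ n‖ ≤ ‖f‖ ^ n
  | 0 => by rw [pow_zero, pow_zero]; exact norm_id_le
  | n + 1 => norm_pow_le' f n.succ_pos

theorem Summable.comp_add_mul_pow_of_lt {f : ℕ → ℝ} {x r : ℝ} (hf0 : ∀ i, 0 ≤ f i)
    (hf : Summable fun i => f i * x ^ i) (m : ℕ) (hr : 0 ≤ r) (hrx : r < x) :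
    Summable fun i => f (i + m) * r ^ i := by
  have hx : 0 < x := hr.trans_lt hrx
  have hshift : Summable fun i => f (i + m) * x ^ (i + m) := (summable_nat_add_iff m).mpr hf
  refine Summable.of_nonneg_of_le (fun i => by have := hf0 (i + m); positivity)
    (fun i => ?_) (hshift.div_const (x ^ m))
  calc f (i + m) * r ^ i ≤ f (i + m) * x ^ i :=
        mul_le_mul_of_nonneg_left (pow_le_pow_left₀ hr hrx.le i) (hf0 _)
    _ = f (i + m) * x ^ (i + m) / x ^ m := by
        rw [pow_add, ← mul_assoc, mul_div_cancel_right₀ _ (pow_pos hx m).ne']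

theorem summable_norm_mul_norm_of_norm_succ_le {α E : Type*} [SeminormedAddGroup α]
    [SeminormedAddGroup E] {c : ℕ → α} {T : ℕ → E} {b : ℕ → ℝ}
    (hT : ∀ i, ‖T (i + 1)‖ ≤ b i) (hb : Summable fun i => ‖c (i + 1)‖ * b i) :
    Summable fun i => ‖c i‖ * ‖T i‖ :=
  (summable_nat_add_iff 1).mp <| Summable.of_nonneg_of_le (fun i => by positivity)
    (fun i => mul_le_mul_of_nonneg_left (hT i) (norm_nonneg _)) hb

theorem norm_tsum_smul_le_of_norm_succ_le {𝕜 E : Type*} [NormedField 𝕜]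
    [SeminormedAddCommGroup E] [NormedSpace 𝕜 E] {c : ℕ → 𝕜} {T : ℕ → E} {b : ℕ → ℝ}
    (hT : ∀ i, ‖T (i + 1)‖ ≤ b i) (hb : Summable fun i => ‖c (i + 1)‖ * b i) :
    ‖∑' i, c i • T i‖ ≤ ‖c 0‖ * ‖T 0‖ + ∑' i, ‖c (i + 1)‖ * b i := by
  have habs := summable_norm_mul_norm_of_norm_succ_le hT hb
  have habs_succ : Summable fun i => ‖c (i + 1)‖ * ‖T (i + 1)‖ :=
    (summable_nat_add_iff 1).mpr habs
  calc ‖∑' i, c i • T i‖ ≤ ∑' i, ‖c i • T i‖ :=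
        norm_tsum_le_tsum_norm (by simpa only [norm_smul] using habs)
    _ = ‖c 0‖ * ‖T 0‖ + ∑' i, ‖c (i + 1)‖ * ‖T (i + 1)‖ := by
        simp only [norm_smul]
        exact habs.tsum_eq_zero_add
    _ ≤ ‖c 0‖ * ‖T 0‖ + ∑' i, ‖c (i + 1)‖ * b i := by
        gcongr with i
        exact hT i

theorem norm_powKL_succ_le {H : ℤ → Type*} [∀ s, NormedAddCommGroup (H s)]
    [∀ s, NormedSpace ℂ (H s)] (A : ∀ s t : ℤ, H s →L[ℂ] H t) (k l i : ℕ) :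
    ‖powKL A k l (i + 1)‖ ≤ ‖A 0 (l : ℤ)‖ * ‖A 0 0‖ ^ i * ‖A (-(k : ℤ)) 0‖ :=
  calc ‖(A 0 (l : ℤ)).comp (((A 0 0) ^ i).comp (A (-(k : ℤ)) 0))‖
      ≤ ‖A 0 (l : ℤ)‖ * (‖(A 0 0) ^ i‖ * ‖A (-(k : ℤ)) 0‖) :=
        (ContinuousLinearMap.opNorm_comp_le _ _).trans <|
          mul_le_mul_of_nonneg_left (ContinuousLinearMap.opNorm_comp_le _ _) (norm_nonneg _)
    _ ≤ ‖A 0 (l : ℤ)‖ * (‖A 0 0‖ ^ i * ‖A (-(k : ℤ)) 0‖) := by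
        gcongr
        exact (A 0 0).norm_pow_le_pow_norm i
    _ = ‖A 0 (l : ℤ)‖ * ‖A 0 0‖ ^ i * ‖A (-(k : ℤ)) 0‖ := (mul_assoc _ _ _).symm

theorem power_series_of_operator_on_scale_general
    {H : ℤ → Type*} [∀ s, NormedAddCommGroup (H s)] [∀ s, NormedSpace ℂ (H s)]
    (A : ∀ s t : ℤ, H s →L[ℂ] H t)
    (a : ℕ → ℂ) (x : ℝ) (hx : ‖A 0 0‖ < x)
    (hconv : Summable fun i : ℕ => ‖a i‖ * x ^ i) :
    ∀ k l : ℕ,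
      Summable (fun i : ℕ => ‖a (i + 1)‖ * ‖powKL A k l i‖) ∧
      ‖∑' i : ℕ, a (i + 1) • powKL A k l i‖ ≤
        ‖a 1‖ * ‖A (-(k : ℤ)) (l : ℤ)‖ +
          ∑' i : ℕ, ‖a (i + 2)‖ * (‖A 0 (l : ℤ)‖ * ‖A 0 0‖ ^ i * ‖A (-(k : ℤ)) 0‖) := by
  intro k l
  have hgeom : Summable fun i => ‖a (i + 2)‖ * ‖A 0 0‖ ^ i :=
    hconv.comp_add_mul_pow_of_lt (fun _ => norm_nonneg _) 2 (norm_nonneg _) hx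
  have hb : Summable fun i =>
      ‖a (i + 2)‖ * (‖A 0 (l : ℤ)‖ * ‖A 0 0‖ ^ i * ‖A (-(k : ℤ)) 0‖) :=
    (hgeom.mul_left (‖A 0 (l : ℤ)‖ * ‖A (-(k : ℤ)) 0‖)).congr fun i => by ring
  exact ⟨summable_norm_mul_norm_of_norm_succ_le (norm_powKL_succ_le A k l) hb,
    norm_tsum_smul_le_of_norm_succ_le (norm_powKL_succ_le A k l) hb⟩

/-- let `(H^s)_{s ∈ ℤ}` be a scale of spaces with continuous inclusions
`J : H^s → H^t` for `t ≤ s`, and let `A` be an operator on the scale with bounded norms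
`‖A‖_{-k,l}` for all `k, l ∈ ℕ`.  If `f(x) = ∑_{i ≥ 1} aᵢ xⁱ` is a power series with
radius of convergence strictly greater than `‖A‖_{0,0}`, then for all `k, l ∈ ℕ` the
series `∑_{i ≥ 1} aᵢ Aⁱ` converges absolutely in the norm `‖·‖_{-k,l}`, with bound
`‖f(A)‖_{-k,l} ≤ |a₁| ‖A‖_{-k,l} + ∑_{i ≥ 2} |aᵢ| ‖A‖_{0,l} ‖A‖_{0,0}^{i-2} ‖A‖_{-k,0}`. -/
theorem power_series_of_operator_on_scale
    {H : ℤ → Type*} [∀ s, NormedAddCommGroup (H s)] [∀ s, NormedSpace ℂ (H s)]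
    [∀ s, CompleteSpace (H s)]
    (J : ∀ s t : ℤ, t ≤ s → (H s →L[ℂ] H t))
    (A : ∀ s t : ℤ, H s →L[ℂ] H t)
    (hcompat : ∀ (s t s' t' : ℤ) (hs : s' ≤ s) (ht : t' ≤ t),
      (J t t' ht).comp (A s t) = (A s' t').comp (J s s' hs))
    (a : ℕ → ℂ) (x : ℝ) (hx : ‖A 0 0‖ < x)
    (hconv : Summable fun i : ℕ => ‖a i‖ * x ^ i) :
    ∀ k l : ℕ,
      Summable (fun i : ℕ => ‖a (i + 1)‖ * ‖powKL A k l i‖) ∧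
      ‖∑' i : ℕ, a (i + 1) • powKL A k l i‖ ≤
        ‖a 1‖ * ‖A (-(k : ℤ)) (l : ℤ)‖ +
          ∑' i : ℕ, ‖a (i + 2)‖ * (‖A 0 (l : ℤ)‖ * ‖A 0 0‖ ^ i * ‖A (-(k : ℤ)) 0‖) :=
  power_series_of_operator_on_scale_general A a x hx hconv
end

section
/- Let A₀, …, A_n be locally traceable bounded operators on a Hilbert space L²(E) over a metric space M partitioned into measurable sets {V_y}_{y∈Y}. Define χ(A₀ ⊗ ⋯ ⊗ A_n)(y₀,…,y_n) := (1/(n+1)!) Σ_{σ∈S_{n+1}} sgn(σ) tr(A₀ P_{y_{σ(0)}} ⋯ A_n P_{y_{σ(n)}}), where P_y is multiplication by the characteristic function of V_y. Then χ satisfies the cyclic symmetry χ(A₀ ⊗ ⋯ ⊗ A_n) = (−1)^n χ(A_n ⊗ A₀ ⊗ ⋯ ⊗ A_{n−1}). -/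
/-! Rotating the tensor factors of a summand is the same, up to cyclicity of the trace, as
precomposing its permutation with the cycle `i ↦ i + 1`; summing over all permutations, this
only multiplies every sign by `sgn(finRotate (n + 1)) = (-1)ⁿ`. -/

/-- The rough character cochain
`χ(A₀ ⊗ ⋯ ⊗ A_m)(y₀, …, y_m) = (1/(m+1)!) ∑_{σ} sgn(σ) tr(A₀ P_{y_{σ(0)}} ⋯ A_m P_{y_{σ(m)}})`,
where `P_y` is the multiplication operator by the characteristic function of `V_y` and
`τ` plays the role of the trace. -/
noncomputable def chi {H : Type*} [NormedAddCommGroup H] [NormedSpace ℂ H] {Y : Type*}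
    (τ : (H →L[ℂ] H) →ₗ[ℂ] ℂ) (P : Y → (H →L[ℂ] H)) {m : ℕ}
    (A : Fin (m + 1) → (H →L[ℂ] H)) (y : Fin (m + 1) → Y) : ℂ :=
  ((Nat.factorial (m + 1) : ℂ))⁻¹ *
    ∑ σ : Equiv.Perm (Fin (m + 1)),
      ((Equiv.Perm.sign σ : ℤ) : ℂ) * τ ((List.ofFn fun i => A i * P (y (σ i))).prod)

open Equiv Finset

theorem List.trace_prod_ofFn_comp_finRotate {M β : Type*} [Monoid M] {τ : M → β}
    (htr : ∀ S T : M, τ (S * T) = τ (T * S)) {n : ℕ} (f : Fin (n + 1) → M) :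
    τ (List.ofFn (f ∘ finRotate (n + 1))).prod = τ (List.ofFn f).prod := by
  rw [List.ofFn_succ (f := f), List.prod_cons, htr, List.ofFn_succ']
  simp [finRotate_apply, Fin.coeSucc_eq_succ]

theorem Equiv.Perm.sum_sign_mul_comp_mul_right {α R : Type*} [Fintype α] [DecidableEq α]
    [CommRing R] (g : Perm α → R) (c : Perm α) :
    ∑ σ, ((Perm.sign σ : ℤ) : R) * g (σ * c) =
      (Perm.sign c : ℤ) * ∑ σ, ((Perm.sign σ : ℤ) : R) * g σ := by
  rw [mul_sum]
  refine Fintype.sum_equiv (Equiv.mulRight c) _ _ fun σ => ?_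
  have hc : ((Perm.sign c : ℤ) : R) * (Perm.sign c : ℤ) = 1 := by
    rw [← Int.cast_mul, ← Units.val_mul, Int.units_mul_self, Units.val_one, Int.cast_one]
  simp only [coe_mulRight, Perm.sign_mul, Units.val_mul, Int.cast_mul]
  linear_combination (((Perm.sign σ : ℤ) : R) * g (σ * c)) * hc.symm

theorem chi_rotate {H : Type*} [NormedAddCommGroup H] [NormedSpace ℂ H] {Y : Type*}
    (τ : (H →L[ℂ] H) →ₗ[ℂ] ℂ) (htr : ∀ S T : H →L[ℂ] H, τ (S * T) = τ (T * S))
    (P : Y → (H →L[ℂ] H)) {n : ℕ} (A : Fin (n + 1) → (H →L[ℂ] H)) (y : Fin (n + 1) → Y) :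
    chi τ P (fun i => A (i - 1)) y = (-1 : ℂ) ^ n * chi τ P A y := by
  set c := finRotate (n + 1)
  have hterm (σ : Perm (Fin (n + 1))) :
      τ (List.ofFn fun i => A (i - 1) * P (y (σ i))).prod
        = τ (List.ofFn fun i => A i * P (y ((σ * c) i))).prod := by
    rw [← List.trace_prod_ofFn_comp_finRotate htr]
    simp [c, finRotate_apply]
  have hsign : ((Perm.sign c : ℤ) : ℂ) = (-1) ^ n := by simp [c, sign_finRotate]
  simp only [chi, hterm, Perm.sum_sign_mul_comp_mul_right
    (fun σ => τ (List.ofFn fun i => A i * P (y (σ i))).prod), hsign]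
  ring

theorem chi_cyclic_symmetry_general
    {H : Type*} [NormedAddCommGroup H] [NormedSpace ℂ H] {Y : Type*}
    (τ : (H →L[ℂ] H) →ₗ[ℂ] ℂ)
    (htr : ∀ S T : H →L[ℂ] H, τ (S * T) = τ (T * S))
    (P : Y → (H →L[ℂ] H))
    (n : ℕ) (A : Fin (n + 1) → (H →L[ℂ] H)) (y : Fin (n + 1) → Y) :
    chi τ P A y = (-1 : ℂ) ^ n * chi τ P (fun i => A (i - 1)) y := by
  rw [chi_rotate τ htr, ← mul_assoc, ← pow_add, Even.neg_one_pow ⟨n, rfl⟩, one_mul]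

/-- cyclic symmetry of the rough character.  If `τ` has the trace property
and the `P_y` are commuting idempotents (multiplications by characteristic functions of a
partition), then `χ(A₀ ⊗ ⋯ ⊗ A_n) = (−1)ⁿ χ(A_n ⊗ A₀ ⊗ ⋯ ⊗ A_{n−1})`. -/
theorem chi_cyclic_symmetry
    {H : Type*} [NormedAddCommGroup H] [NormedSpace ℂ H] {Y : Type*}
    (τ : (H →L[ℂ] H) →ₗ[ℂ] ℂ)
    (htr : ∀ S T : H →L[ℂ] H, τ (S * T) = τ (T * S))
    (P : Y → (H →L[ℂ] H))
    (hP : ∀ y, IsIdempotentElem (P y))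
    (hPcomm : ∀ y y', Commute (P y) (P y'))
    (n : ℕ) (A : Fin (n + 1) → (H →L[ℂ] H)) (y : Fin (n + 1) → Y) :
    chi τ P A y = (-1 : ℂ) ^ n * chi τ P (fun i => A (i - 1)) y :=
  chi_cyclic_symmetry_general τ htr P n A y
end

section
/- Let Y be a uniformly discrete metric space. The pairing ⟨φ, σ⟩ := Σ_{ȳ ∈ Y^{q+1}} φ(ȳ)·σ(ȳ) between a coarse q-cochain φ ∈ CX^q(Y) and a uniformly finite q-chain σ ∈ C_q^uf(Y) is a well-defined (absolutely convergent, in fact finite) bilinear pairing, and satisfies ⟨∂φ, τ⟩ = ⟨φ, ∂τ⟩ for τ ∈ C_{q+1}^uf(Y); hence it descends to a pairing HX^q(Y) × H_q^uf(Y) → ℂ. -/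
open Bornology

/-- A coarse `q`-cochain on the uniformly discrete metric space `Y`. -/
def IsCoarseCochain {Y : Type*} [MetricSpace Y] {q : ℕ}
    (φ : (Fin (q + 1) → Y) → ℂ) : Prop :=
  ∀ R : ℝ, 0 < R →
    IsBounded {y : Fin (q + 1) → Y | φ y ≠ 0 ∧ ∃ x : Y, ∀ j, dist (y j) x ≤ R}

/-- A uniformly finite `q`-chain: uniformly bounded coefficients supported in a bounded
neighbourhood of the multidiagonal. -/
def IsUFChain {Y : Type*} [MetricSpace Y] {q : ℕ} (σ : (Fin (q + 1) → Y) → ℂ) : Prop :=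
  (∃ K : ℝ, ∀ y, ‖σ y‖ ≤ K) ∧
  (∃ R : ℝ, ∀ y, σ y ≠ 0 → ∀ j j', dist (y j) (y j') ≤ R)

/-- The (full alternating) Alexander–Spanier coboundary on coarse cochains. -/
noncomputable def coboundary {Y : Type*} (q : ℕ) (φ : (Fin (q + 1) → Y) → ℂ) :
    (Fin (q + 2) → Y) → ℂ :=
  fun y => ∑ i : Fin (q + 2), ((-1 : ℂ)) ^ (i : ℕ) * φ (fun j => y (i.succAbove j))

/-- The uniformly finite boundary: the coefficient of `z̄` in `∂τ` is
`∑_j (−1)ʲ ∑_{x ∈ Y} τ(z₀, …, z_{j-1}, x, z_j, …)`. -/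
noncomputable def ufBoundary {Y : Type*} (q : ℕ) (τ : (Fin (q + 2) → Y) → ℂ) :
    (Fin (q + 1) → Y) → ℂ :=
  fun z => ∑ j : Fin (q + 2), ((-1 : ℂ)) ^ (j : ℕ) * ∑ᶠ x : Y, τ (Fin.insertNth j x z)

/-!
Every nonzero term of either pairing sits on a tuple whose coordinates are pairwise `R`-close
and on which `φ` (or a face of it) does not vanish. By the coarse condition one coordinate of
such a tuple ranges over a bounded set, so every coordinate ranges over a bounded, hence finite,
set. Once all sums are finite, `⟨∂φ, τ⟩ = ⟨φ, ∂τ⟩` is the change of variables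
`y ↦ (Fin.removeNth i y, y i)` in the `i`-th face of the coboundary, followed by exchanging
finite sums.
-/

open Function

section Adjunction

variable {M : Type*} [NonUnitalNonAssocSemiring M]

lemma finsum_sum_mul_comm {β ι : Type*} (s : Finset ι) (c : ι → M) (f : ι → β → M)
    (hf : ∀ i ∈ s, (f i).HasFiniteSupport) :
    ∑ᶠ b, ∑ i ∈ s, c i * f i b = ∑ i ∈ s, c i * ∑ᶠ b, f i b := by
  rw [finsum_sum_comm s (fun b i => c i * f i b) fun i hi => (hf i hi).mul_right fun _ => c i]
  exact Finset.sum_congr rfl fun i hi => (mul_finsum' _ _ (hf i hi)).symm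

variable {α : Type*} {n : ℕ}

lemma finsum_removeNth_mul_eq (i : Fin (n + 1)) (φ : (Fin n → α) → M)
    (τ : (Fin (n + 1) → α) → M) (hface : (fun y => φ (i.removeNth y) * τ y).HasFiniteSupport)
    (hfibre : ∀ z, (fun x => τ (i.insertNth x z)).HasFiniteSupport) :
    ∑ᶠ y, φ (i.removeNth y) * τ y = ∑ᶠ z, φ z * ∑ᶠ x, τ (i.insertNth x z) := by
  let e := (Equiv.prodComm _ _).trans (Fin.insertNthEquiv (fun _ => α) i)
  rw [← finsum_comp_equiv e,
    finsum_curry (fun p => φ (i.removeNth (e p)) * τ (e p)) (hface.comp_of_injective e.injective)]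
  refine finsum_congr fun z => ?_
  rw [mul_finsum' _ _ (hfibre z)]
  refine finsum_congr fun x => ?_
  change φ (i.removeNth (i.insertNth (α := fun _ => α) x z)) * τ (i.insertNth x z) = _
  rw [Fin.removeNth_insertNth]

lemma hasFiniteSupport_mul_finsum_insertNth (i : Fin (n + 1)) (φ : (Fin n → α) → M)
    (τ : (Fin (n + 1) → α) → M) (hface : (fun y => φ (i.removeNth y) * τ y).HasFiniteSupport)
    (hfibre : ∀ z, (fun x => τ (i.insertNth x z)).HasFiniteSupport) :
    (fun z => φ z * ∑ᶠ x, τ (i.insertNth x z)).HasFiniteSupport := by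
  refine (hface.image i.removeNth).subset fun z hz => ?_
  rw [mem_support, mul_finsum' _ _ (hfibre z)] at hz
  obtain ⟨x, hx⟩ : ∃ x, φ z * τ (i.insertNth x z) ≠ 0 := by
    by_contra! h
    exact hz (finsum_eq_zero_of_forall_eq_zero h)
  exact ⟨i.insertNth x z, by simpa using hx, by simp⟩

end Adjunction

theorem finsum_coboundary_mul_eq {Y : Type*} {q : ℕ} (φ : (Fin (q + 1) → Y) → ℂ)
    (τ : (Fin (q + 2) → Y) → ℂ)
    (hface : ∀ i : Fin (q + 2), (fun y => φ (i.removeNth y) * τ y).HasFiniteSupport)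
    (hfibre : ∀ (i : Fin (q + 2)) z, (fun x => τ (i.insertNth x z)).HasFiniteSupport) :
    ∑ᶠ y, coboundary q φ y * τ y = ∑ᶠ z, φ z * ufBoundary q τ z := by
  calc ∑ᶠ y, coboundary q φ y * τ y
      = ∑ᶠ y, ∑ i : Fin (q + 2), (-1 : ℂ) ^ (i : ℕ) * (φ (i.removeNth y) * τ y) := by
        simp only [coboundary, Finset.sum_mul, mul_assoc]
        rfl
    _ = ∑ i : Fin (q + 2), (-1 : ℂ) ^ (i : ℕ) * ∑ᶠ y, φ (i.removeNth y) * τ y :=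
        finsum_sum_mul_comm _ _ _ fun i _ => hface i
    _ = ∑ i : Fin (q + 2), (-1 : ℂ) ^ (i : ℕ) * ∑ᶠ z, φ z * ∑ᶠ x, τ (i.insertNth x z) :=
        Finset.sum_congr rfl fun i _ => by
          rw [finsum_removeNth_mul_eq i φ τ (hface i) (hfibre i)]
    _ = ∑ᶠ z, ∑ i : Fin (q + 2), (-1 : ℂ) ^ (i : ℕ) * (φ z * ∑ᶠ x, τ (i.insertNth x z)) :=
        (finsum_sum_mul_comm _ _ _ fun i _ =>
          hasFiniteSupport_mul_finsum_insertNth i φ τ (hface i) (hfibre i)).symm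
    _ = ∑ᶠ z, φ z * ufBoundary q τ z :=
        finsum_congr fun z => by
          simp only [ufBoundary, Finset.mul_sum, mul_left_comm]

section NearDiagonal

variable {Y : Type*} [PseudoMetricSpace Y]

def nearDiagonal (ι : Type*) (R : ℝ) : Set (ι → Y) :=
  {y | ∀ j j', dist (y j) (y j') ≤ R}

lemma finite_of_subset_nearDiagonal (hfin : ∀ s : Set Y, IsBounded s → s.Finite)
    {ι : Type*} [Finite ι] {R : ℝ} {S : Set (ι → Y)} (hS : S ⊆ nearDiagonal ι R) (k : ι)
    (hk : IsBounded ((fun y => y k) '' S)) : S.Finite :=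
  (Set.Finite.pi fun _ => hfin _ (hk.cthickening (δ := R))).subset fun y hy j _ =>
    Metric.mem_cthickening_of_dist_le _ _ _ _ ⟨y, hy, rfl⟩ (hS hy j k)

lemma hasFiniteSupport_insertNth {M : Type*} [Zero M]
    (hfin : ∀ s : Set Y, IsBounded s → s.Finite) {n : ℕ} {τ : (Fin (n + 2) → Y) → M} {R : ℝ}
    (hτ : support τ ⊆ nearDiagonal _ R) (i : Fin (n + 2)) (z : Fin (n + 1) → Y) :
    (fun x => τ (i.insertNth x z)).HasFiniteSupport :=
  hfin _ <| Metric.isBounded_closedBall.subset fun x hx => by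
    simpa using hτ hx i (i.succAbove 0)

end NearDiagonal

namespace IsCoarseCochain

variable {Y : Type*} [MetricSpace Y] {q : ℕ} {φ : (Fin (q + 1) → Y) → ℂ}

lemma isBounded_image_eval_zero (hφ : IsCoarseCochain φ) (R : ℝ) :
    IsBounded ((fun z => z 0) '' (support φ ∩ nearDiagonal _ R)) :=
  (LipschitzWith.eval 0).isBounded_image <|
    (hφ (max R 1) (lt_max_of_lt_right one_pos)).subset fun z ⟨hz, hR⟩ =>
      ⟨hz, z 0, fun j => (hR j 0).trans (le_max_left R 1)⟩

lemma hasFiniteSupport_mul (hφ : IsCoarseCochain φ)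
    (hfin : ∀ s : Set Y, IsBounded s → s.Finite) {σ : (Fin (q + 1) → Y) → ℂ} {R : ℝ}
    (hσ : support σ ⊆ nearDiagonal _ R) : (fun y => φ y * σ y).HasFiniteSupport := by
  have hsupp : support (fun y => φ y * σ y) ⊆ support φ ∩ nearDiagonal _ R :=
    fun y hy => ⟨left_ne_zero_of_mul hy, hσ (right_ne_zero_of_mul hy)⟩
  exact finite_of_subset_nearDiagonal hfin (hsupp.trans Set.inter_subset_right) 0
    ((hφ.isBounded_image_eval_zero R).subset (Set.image_mono hsupp))

lemma hasFiniteSupport_removeNth_mul (hφ : IsCoarseCochain φ)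
    (hfin : ∀ s : Set Y, IsBounded s → s.Finite) {τ : (Fin (q + 2) → Y) → ℂ} {R : ℝ}
    (hτ : support τ ⊆ nearDiagonal _ R) (i : Fin (q + 2)) :
    (fun y => φ (i.removeNth y) * τ y).HasFiniteSupport := by
  have hsupp : support (fun y => φ (i.removeNth y) * τ y) ⊆ nearDiagonal _ R :=
    fun y hy => hτ (right_ne_zero_of_mul hy)
  refine finite_of_subset_nearDiagonal hfin hsupp (i.succAbove 0) <|
    (hφ.isBounded_image_eval_zero R).subset ?_
  rintro _ ⟨y, hy, rfl⟩
  exact ⟨i.removeNth y, ⟨left_ne_zero_of_mul hy, fun j j' => hsupp hy _ _⟩, rfl⟩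

end IsCoarseCochain

theorem coarse_uf_pairing_general
    {Y : Type*} [MetricSpace Y]
    (hfin : ∀ s : Set Y, IsBounded s → s.Finite)
    {q : ℕ} (φ : (Fin (q + 1) → Y) → ℂ) (hφ : IsCoarseCochain φ) :
    (∀ σ : (Fin (q + 1) → Y) → ℂ, IsUFChain σ →
      {y : Fin (q + 1) → Y | φ y * σ y ≠ 0}.Finite) ∧
    (∀ τ : (Fin (q + 2) → Y) → ℂ, IsUFChain τ →
      ∑ᶠ y : Fin (q + 2) → Y, coboundary q φ y * τ y
        = ∑ᶠ z : Fin (q + 1) → Y, φ z * ufBoundary q τ z) :=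
  ⟨fun _ ⟨_, _, hσ⟩ => hφ.hasFiniteSupport_mul hfin hσ,
    fun τ ⟨_, _, hτ⟩ => finsum_coboundary_mul_eq φ τ (hφ.hasFiniteSupport_removeNth_mul hfin hτ)
      fun i => hasFiniteSupport_insertNth hfin hτ i⟩

/-- on a uniformly discrete metric space of bounded geometry (every
bounded set is finite), the pairing `⟨φ, σ⟩ = ∑_{ȳ} φ(ȳ)·σ(ȳ)` between coarse cochains
and uniformly finite chains has only finitely many nonzero terms (so is well defined and
bilinear) and satisfies the adjunction `⟨∂φ, τ⟩ = ⟨φ, ∂τ⟩`; hence it descends to a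
pairing `HX^q(Y) × H_q^uf(Y) → ℂ`. -/
theorem coarse_uf_pairing
    {Y : Type*} [MetricSpace Y] (ε : ℝ) (hε : 0 < ε)
    (hsep : ∀ y y' : Y, y ≠ y' → ε ≤ dist y y')
    (hfin : ∀ s : Set Y, IsBounded s → s.Finite)
    {q : ℕ} (φ : (Fin (q + 1) → Y) → ℂ) (hφ : IsCoarseCochain φ) :
    (∀ σ : (Fin (q + 1) → Y) → ℂ, IsUFChain σ →
      {y : Fin (q + 1) → Y | φ y * σ y ≠ 0}.Finite) ∧
    (∀ τ : (Fin (q + 2) → Y) → ℂ, IsUFChain τ →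
      ∑ᶠ y : Fin (q + 2) → Y, coboundary q φ y * τ y
        = ∑ᶠ z : Fin (q + 1) → Y, φ z * ufBoundary q τ z) :=
  coarse_uf_pairing_general hfin φ hφ
end
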